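/- Let G be a finitely generated abelian group, X = A ∪ T ∪ F ⊆ G a finite list (B = A ∪ T ∪ F disjoint) such that rk(C) = rk(A) + |C ∩ F| for all A ⊆ C ⊆ B, where rk(S) denotes the free rank of the subgroup generated by S. Then ⟨A ∪ T⟩ ∩ ⟨A ∪ F⟩ = ⟨A⟩. -/

import Mathlib

open Finset
open scoped TensorProduct

/-- The free rank of the subgroup generated by a set `s` in an abelian group. -/
noncomputable def grk {G : Type*} [AddCommGroup G] (s : Set G) : ℕ :=
  Module.finrank ℤ (AddSubgroup.closure s)

open nonZeroDivisors in
/-- Bridging lemma: the free rank of `⟨s⟩` equals the `ℚ`-dimension of the span of the image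
of `s` in `ℚ ⊗[ℤ] G`. -/
lemma grk_eq_finrank_span {G : Type*} [AddCommGroup G] (s : Set G) :
    grk s = Module.finrank ℚ
      (Submodule.span ℚ ((TensorProduct.mk ℤ ℚ G 1) '' s)) := by
  set f : G →ₗ[ℤ] ℚ ⊗[ℤ] G := TensorProduct.mk ℤ ℚ G 1 with hf
  haveI : IsLocalizedModule ℤ⁰ f :=
    (isLocalizedModule_iff_isBaseChange ℤ⁰ ℚ f).mpr (TensorProduct.isBaseChange ℤ G ℚ)
  -- step 1 : grk s = finrank ℤ (span ℤ s)
  have hmemiff : ∀ y : G, y ∈ AddSubgroup.closure s ↔ y ∈ Submodule.span ℤ s := by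
    intro y
    rw [← Submodule.span_int_eq_addSubgroupClosure]
    exact Iff.rfl
  have e : (AddSubgroup.closure s) ≃+ (Submodule.span ℤ s) := by
    refine AddEquiv.mk ⟨fun x => ⟨x.1, (hmemiff x.1).mp x.2⟩,
      fun x => ⟨x.1, (hmemiff x.1).mpr x.2⟩, ?_, ?_⟩ ?_
    · intro x; rfl
    · intro x; rfl
    · intro x y; rfl
  have h1 : grk s = Module.finrank ℤ (Submodule.span ℤ s) :=
    e.toIntLinearEquiv.finrank_eq
  -- step 2 : finrank ℤ (span ℤ s) = finrank ℚ (span ℚ (f '' s))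
  have h2 := (IsLocalization.rank_eq ℚ ℤ⁰ (le_refl _)
    (N := ↥((Submodule.span ℤ s).localized' ℚ ℤ⁰ f))).trans
    (IsLocalizedModule.rank_eq (p := ℤ⁰) (le_refl _)
    ((Submodule.span ℤ s).toLocalized' ℚ ℤ⁰ f))
  have h3 : (Submodule.span ℤ s).localized' ℚ ℤ⁰ f = Submodule.span ℚ (f '' s) :=
    Submodule.localized'_span ℚ ℤ⁰ f s
  rw [h3] at h2
  rw [h1]
  exact (congrArg Cardinal.toNat h2).symm

/-- If `B = A ∪ T ∪ F` disjointly and `rk(C) = rk(A) + |C ∩ F|` for all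
`A ⊆ C ⊆ B`, then `⟨A ∪ T⟩ ∩ ⟨A ∪ F⟩ = ⟨A⟩`. -/
theorem closure_inter_eq_closure {G : Type*} [AddCommGroup G] [AddGroup.FG G]
    {ι : Type*} [Fintype ι] [DecidableEq ι] (X : ι → G)
    (A T F : Finset ι) (hAT : Disjoint A T) (hAF : Disjoint A F)
    (hTF : Disjoint T F)
    (hrk : ∀ C : Finset ι, A ⊆ C → C ⊆ A ∪ T ∪ F →
      grk (X '' ↑C) = grk (X '' ↑A) + (C ∩ F).card) :
    AddSubgroup.closure (X '' ↑(A ∪ T)) ⊓ AddSubgroup.closure (X '' ↑(A ∪ F)) =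
      AddSubgroup.closure (X '' ↑A) := by
  classical
  set f : G →ₗ[ℤ] ℚ ⊗[ℤ] G := TensorProduct.mk ℤ ℚ G 1 with hfdef
  set g : ι → ℚ ⊗[ℤ] G := fun i => f (X i) with hgdef
  -- the rational dimension function
  set d : Finset ι → ℕ :=
    fun C => Module.finrank ℚ (Submodule.span ℚ (g '' ↑C)) with hddef
  have hbr : ∀ C : Finset ι, grk (X '' ↑C) = d C := by
    intro C
    rw [grk_eq_finrank_span, hddef, Set.image_image]
    rfl
  haveI hfinD : ∀ C : Finset ι, FiniteDimensional ℚ (Submodule.span ℚ (g '' ↑C)) :=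
    fun C => FiniteDimensional.span_of_finite ℚ (C.finite_toSet.image g)
  -- membership transfer to the rational span
  have hmem : ∀ (C : Finset ι) (x : G), x ∈ AddSubgroup.closure (X '' ↑C) →
      f x ∈ Submodule.span ℚ (g '' ↑C) := by
    intro C x hx
    rw [← Submodule.span_int_eq_addSubgroupClosure, Submodule.mem_toAddSubgroup] at hx
    have h1 : f x ∈ Submodule.map f (Submodule.span ℤ (X '' ↑C)) :=
      Submodule.mem_map_of_mem hx
    rw [Submodule.map_span] at h1
    have h2 : Submodule.span ℤ (f '' (X '' ↑C)) ≤
        (Submodule.span ℚ (g '' ↑C)).restrictScalars ℤ := by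
      rw [Submodule.span_le]
      rw [Set.image_image]
      exact Submodule.subset_span
    exact h2 h1
  -- the key rank facts
  have hAT_sub : A ∪ T ⊆ A ∪ T ∪ F := subset_union_left
  have hAF_sub : A ∪ F ⊆ A ∪ T ∪ F := union_subset_union subset_union_left (subset_refl F)
  have eAT : d (A ∪ T) = d A := by
    have h := hrk (A ∪ T) subset_union_left hAT_sub
    have hint : (A ∪ T) ∩ F = ∅ :=
      Finset.disjoint_iff_inter_eq_empty.mp (Finset.disjoint_union_left.mpr ⟨hAF, hTF⟩)
    rw [hint, Finset.card_empty, hbr, hbr] at h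
    simpa using h
  have eAF : d (A ∪ F) = d A + F.card := by
    have h := hrk (A ∪ F) subset_union_left hAF_sub
    rw [Finset.union_inter_cancel_right, hbr, hbr] at h
    exact h
  -- span equality on the T side
  have hWT : Submodule.span ℚ (g '' ↑(A ∪ T)) = Submodule.span ℚ (g '' ↑A) := by
    have hle : Submodule.span ℚ (g '' ↑A) ≤ Submodule.span ℚ (g '' ↑(A ∪ T)) :=
      Submodule.span_mono (Set.image_mono (Finset.coe_subset.mpr subset_union_left))
    exact (Submodule.eq_of_le_of_finrank_le hle eAT.le).symm
  -- prove the two inclusions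
  apply le_antisymm
  · -- the hard direction
    intro x hx
    obtain ⟨hxT, hxF⟩ := AddSubgroup.mem_inf.mp hx
    -- decompose x = a + b with a ∈ ⟨A⟩, b ∈ ⟨F⟩
    have himg : X '' ↑(A ∪ F) = X '' ↑A ∪ X '' ↑F := by
      rw [Finset.coe_union, Set.image_union]
    rw [himg, AddSubgroup.closure_union, AddSubgroup.mem_sup] at hxF
    obtain ⟨a, ha, b, hb, hab⟩ := hxF
    -- write b as an integer combination of the X i, i ∈ F
    rw [← Submodule.span_int_eq_addSubgroupClosure, Submodule.mem_toAddSubgroup] at hb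
    rw [Finsupp.mem_span_image_iff_linearCombination] at hb
    obtain ⟨l, hlsupp, hlb⟩ := hb
    rw [Finsupp.mem_supported] at hlsupp
    -- f b lies in W := span ℚ (g '' A)
    have hfx : f x ∈ Submodule.span ℚ (g '' ↑A) := by
      have := hmem (A ∪ T) x hxT
      rwa [hWT] at this
    have hfa : f a ∈ Submodule.span ℚ (g '' ↑A) := hmem A a ha
    have hfb : f b ∈ Submodule.span ℚ (g '' ↑A) := by
      have : f b = f x - f a := by rw [← hab, map_add]; abel
      rw [this]
      exact Submodule.sub_mem _ hfx hfa
    -- f b as a rational combination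
    have hsum : ∑ i ∈ l.support, (l i : ℚ) • g i ∈ Submodule.span ℚ (g '' ↑A) := by
      have hb' : f b = ∑ i ∈ l.support, (l i : ℚ) • g i := by
        rw [← hlb, Finsupp.linearCombination_apply, Finsupp.sum, map_sum]
        refine Finset.sum_congr rfl fun i _ => ?_
        rw [map_zsmul, Int.cast_smul_eq_zsmul]
      rw [← hb']
      exact hfb
    -- all coefficients vanish
    have hzero : ∀ j ∈ F, l j = 0 := by
      intro j hj
      by_contra hlj
      have hjs : j ∈ l.support := Finsupp.mem_support_iff.mpr hlj
      set P' : Submodule ℚ (ℚ ⊗[ℤ] G) := Submodule.span ℚ (g '' ↑(A ∪ F.erase j)) with hP'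
      have hWP : Submodule.span ℚ (g '' ↑A) ≤ P' :=
        Submodule.span_mono (Set.image_mono (Finset.coe_subset.mpr subset_union_left))
      have hterm : ∀ i ∈ l.support.erase j, (l i : ℚ) • g i ∈ P' := by
        intro i hi
        obtain ⟨hij, hiF⟩ := Finset.mem_erase.mp hi
        refine Submodule.smul_mem _ _ (Submodule.subset_span ⟨i, ?_, rfl⟩)
        exact_mod_cast Finset.mem_union_right _ (Finset.mem_erase.mpr ⟨hij, hlsupp hiF⟩)
      have hgj : g j ∈ P' := by
        have hsplit : (l j : ℚ) • g j + ∑ i ∈ l.support.erase j, (l i : ℚ) • g i =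
            ∑ i ∈ l.support, (l i : ℚ) • g i :=
          Finset.add_sum_erase l.support (fun i => (l i : ℚ) • g i) hjs
        have h1 : (l j : ℚ) • g j ∈ P' := by
          have heq : (l j : ℚ) • g j = (∑ i ∈ l.support, (l i : ℚ) • g i) -
              ∑ i ∈ l.support.erase j, (l i : ℚ) • g i := by
            rw [← hsplit]; abel
          rw [heq]
          exact Submodule.sub_mem _ (hWP hsum) (Submodule.sum_mem _ hterm)
        have h2 := Submodule.smul_mem P' ((l j : ℚ)⁻¹) h1
        rwa [inv_smul_smul₀ (by exact_mod_cast hlj)] at h2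
      -- the full span is contained in P'
      have hle : Submodule.span ℚ (g '' ↑(A ∪ F)) ≤ P' := by
        rw [Submodule.span_le]
        rintro y ⟨i, hi, rfl⟩
        rw [Finset.coe_union] at hi
        rcases hi with hi | hi
        · exact Submodule.subset_span ⟨i, by exact_mod_cast Finset.mem_union_left _ (by exact_mod_cast hi), rfl⟩
        · by_cases hij : i = j
          · subst hij; exact hgj
          · exact Submodule.subset_span
              ⟨i, by exact_mod_cast Finset.mem_union_right _ (Finset.mem_erase.mpr ⟨hij, by exact_mod_cast hi⟩), rfl⟩
      -- rank contradiction
      have hC_sub : A ∪ F.erase j ⊆ A ∪ T ∪ F :=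
        union_subset (subset_union_left.trans hAT_sub)
          ((Finset.erase_subset _ _).trans (subset_union_right))
      have eAE : d (A ∪ F.erase j) = d A + (F.erase j).card := by
        have h := hrk (A ∪ F.erase j) subset_union_left hC_sub
        have hint : (A ∪ F.erase j) ∩ F = F.erase j := by
          ext i
          simp only [Finset.mem_inter, Finset.mem_union, Finset.mem_erase]
          constructor
          · rintro ⟨h1 | ⟨hne, _⟩, h2⟩
            · exact absurd h2 (Finset.disjoint_left.mp hAF h1)
            · exact ⟨hne, h2⟩
          · rintro ⟨hne, hF⟩
            exact ⟨Or.inr ⟨hne, hF⟩, hF⟩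
        rw [hint, hbr, hbr] at h
        exact h
      have hmono : d (A ∪ F) ≤ d (A ∪ F.erase j) := Submodule.finrank_mono hle
      rw [eAF, eAE, Finset.card_erase_of_mem hj] at hmono
      have hFpos : 1 ≤ F.card := Finset.card_pos.mpr ⟨j, hj⟩
      omega
    -- conclude b = 0
    have hl0 : l = 0 := by
      ext i
      by_cases hi : i ∈ F
      · exact hzero i hi
      · by_contra h
        exact hi (by exact_mod_cast hlsupp (Finsupp.mem_support_iff.mpr h))
    have hb0 : b = 0 := by rw [← hlb, hl0, map_zero]
    rw [← hab, hb0, add_zero]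
    exact ha
  · -- the easy direction
    refine le_inf ?_ ?_ <;>
      exact AddSubgroup.closure_mono
        (Set.image_mono (Finset.coe_subset.mpr subset_union_left))
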